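/- Under the standing hypotheses, with φ* := lim_k R_k, the partial sums satisfy Σ_{j=1}^{k} p_min σ a (τ_{j−1}²/τ_max) ‖d^{j−1}‖² ≤ R_0 − φ* for all k ∈ ℕ; consequently τ_k d^k → 0 as k → ∞. -/

import Mathlib

open Set Filter Topology

noncomputable section

variable {E : Type*} [NormedAddCommGroup E] [InnerProductSpace ℝ E] [FiniteDimensional ℝ E]

open Classical in
/-- The indicator function of a set `M` (`0` on `M`, `+∞` elsewhere), with values in `EReal`. -/
def indicatorFun (M : Set E) (x : E) : EReal := if x ∈ M then 0 else ⊤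

/-- The Fréchet (regular) subdifferential of an extended-real-valued function `g` at `x`. -/
def frechetSubdiff (g : E → EReal) (x : E) : Set E :=
  {v | ∀ ε : ℝ, 0 < ε →
    ∀ᶠ y in 𝓝 x, g x + (((inner ℝ v (y - x) : ℝ) - ε * ‖y - x‖ : ℝ) : EReal) ≤ g y}

/-- The limiting (Mordukhovich) subdifferential of `g` at `x`. -/
def limitingSubdiff (g : E → EReal) (x : E) : Set E :=
  {v | ∃ xs vs : ℕ → E,
    Tendsto xs atTop (𝓝 x) ∧
    Tendsto (fun n => g (xs n)) atTop (𝓝 (g x)) ∧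
    (∀ n, vs n ∈ frechetSubdiff g (xs n)) ∧
    Tendsto vs atTop (𝓝 v)}

/-- The projectional limiting subdifferential of `g` at `x` relative to `M`:
the orthogonal projection onto the tangent space `T x` of the limiting
subdifferential of `g + δ_M` at `x`. -/
def projSubdiff (g : E → ℝ) (M : Set E) (T : E → Submodule ℝ E) (x : E) : Set E :=
  (fun v => (((T x).orthogonalProjectionOnto v : T x) : E)) ''
    limitingSubdiff (fun y => (g y : EReal) + indicatorFun M y) x

/-- `M ⊆ E` is a smooth embedded submanifold with tangent spaces `T x`: around each
point of `M` there is a `C¹` local defining function with surjective derivative at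
that point, and on `M` the tangent space is the kernel of the derivative. -/
def IsSubmanifold (M : Set E) (T : E → Submodule ℝ E) : Prop :=
  ∀ x ∈ M, ∃ (m : ℕ) (U : Set E) (F : E → (Fin m → ℝ)),
    IsOpen U ∧ x ∈ U ∧ ContDiffOn ℝ 1 F U ∧
    Function.Surjective ⇑(fderiv ℝ F x) ∧
    M ∩ U = {y ∈ U | F y = 0} ∧
    ∀ y ∈ M ∩ U, T y = LinearMap.ker (fderiv ℝ F y : E →ₗ[ℝ] (Fin m → ℝ))

/-- A retraction on the submanifold `M` with tangent spaces `T`: a `C²` map on the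
tangent bundle with values in `M` such that `R_x(0) = x` and `DR_x(0) = id`. -/
structure Retraction (M : Set E) (T : E → Submodule ℝ E) where
  R : E → E → E
  mem_target : ∀ x ∈ M, ∀ ξ ∈ T x, R x ξ ∈ M
  map_zero : ∀ x ∈ M, R x 0 = x
  smooth : ContDiffOn ℝ 2 (fun p : E × E => R p.1 p.2) {p : E × E | p.1 ∈ M ∧ p.2 ∈ T p.1}
  deriv_id : ∀ x ∈ M, ∀ ξ ∈ T x, HasDerivAt (fun t : ℝ => R x (t • ξ)) ξ 0

/-- Assumption A1: a local nonsmooth descent property of `φ` along the retraction,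
together with local boundedness of the projectional subdifferential on `M`. -/
def AssumptionA1 (M : Set E) (T : E → Submodule ℝ E) (Ret : Retraction M T) (φ : E → ℝ) : Prop :=
  (∀ z ∈ M, ∃ κ > (0:ℝ), ∃ r > (0:ℝ), ∃ O : Set E, IsOpen O ∧ z ∈ O ∧
    ∀ x ∈ M ∩ O, ∀ ξ ∈ T x, ‖ξ‖ ≤ r → ∀ w ∈ projSubdiff φ M T x,
      φ (Ret.R x ξ) - (φ x + (inner ℝ w ξ : ℝ)) ≤ κ * ‖ξ‖ ^ 2) ∧
  (∀ z ∈ M, ∃ ρ > (0:ℝ), ∃ c : ℝ, ∀ x ∈ M, ‖x - z‖ < ρ →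
    ∀ w ∈ projSubdiff φ M T x, ‖w‖ ≤ c)

/-- A run of the nonmonotone subgradient method on the manifold `M`:
subgradients `w k`, directions `d k`, stepsizes `τ k` obtained by backtracking
from initial trial stepsizes `τhat k` (with `j k` backtracking steps), iterates
`x k` and reference values `Rv k` updated by the mean-rule with weights `p k`. -/
structure AlgSeq (M : Set E) (T : E → Submodule ℝ E) (Ret : Retraction M T) (φ : E → ℝ)
    (σ β τmin τmax pmin a b : ℝ) where
  x : ℕ → E
  w : ℕ → E
  d : ℕ → E
  τhat : ℕ → ℝ
  j : ℕ → ℕ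
  τ : ℕ → ℝ
  p : ℕ → ℝ
  Rv : ℕ → ℝ
  x_mem : ∀ k, x k ∈ M
  w_mem : ∀ k, w k ∈ projSubdiff φ M T (x k)
  w_ne : ∀ k, w k ≠ 0
  d_mem : ∀ k, d k ∈ T (x k)
  d_ne : ∀ k, d k ≠ 0
  descent : ∀ k, (inner ℝ (w k) (d k) : ℝ) ≤ -a * ‖d k‖ ^ 2
  dir_bound : ∀ k, ‖w k‖ ≤ b * ‖d k‖
  τhat_mem : ∀ k, τhat k ∈ Set.Icc τmin τmax
  τ_def : ∀ k, τ k = β ^ (j k) * τhat k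
  j_least : ∀ k, IsLeast {i : ℕ |
      φ (Ret.R (x k) ((β ^ i * τhat k) • d k)) ≤
        Rv k + σ * (β ^ i * τhat k) * (inner ℝ (w k) (d k) : ℝ)} (j k)
  x_succ : ∀ k, x (k + 1) = Ret.R (x k) (τ k • d k)
  p_mem : ∀ k, p (k + 1) ∈ Set.Icc pmin 1
  R_zero : Rv 0 = φ (x 0)
  R_succ : ∀ k, Rv (k + 1) = (1 - p (k + 1)) * Rv k + p (k + 1) * φ (x (k + 1))

/-!
The line-search test, together with `⟨w^k, d^k⟩ ≤ -a‖d^k‖²`, gives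
`φ(x^{k+1}) ≤ R_k - σ a τ_k ‖d^k‖²`; averaging into the reference value with weight
`p_{k+1} ≥ p_min` makes `R_k` drop by at least `p_min σ a τ_k ‖d^k‖² ≥ p_min σ a (τ_k²/τ_max) ‖d^k‖²`.
Telescoping against `R_k → φ*` bounds the partial sums, so the terms, a fixed positive
multiple of `‖τ_k d^k‖²`, tend to zero.
-/

theorem sum_range_le_sub_of_tendsto {R c : ℕ → ℝ} {L : ℝ} (hc : ∀ k, 0 ≤ c k)
    (hstep : ∀ k, c k ≤ R k - R (k + 1)) (hR : Tendsto R atTop (𝓝 L)) (k : ℕ) :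
    ∑ i ∈ Finset.range k, c i ≤ R 0 - L := by
  have hanti : Antitone R := antitone_nat_of_succ_le fun k => by linarith [hc k, hstep k]
  have hL : L ≤ R k := hanti.le_of_tendsto hR k
  calc ∑ i ∈ Finset.range k, c i ≤ ∑ i ∈ Finset.range k, (R i - R (i + 1)) :=
        Finset.sum_le_sum fun i _ => hstep i
    _ = R 0 - R k := Finset.sum_range_sub' R k
    _ ≤ R 0 - L := by linarith

theorem tendsto_zero_of_tendsto_const_mul_norm_sq {F : Type*} [SeminormedAddCommGroup F]
    {v : ℕ → F} {C : ℝ} (hC : C ≠ 0) (h : Tendsto (fun k => C * ‖v k‖ ^ 2) atTop (𝓝 0)) :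
    Tendsto v atTop (𝓝 0) := by
  have hsq : Tendsto (fun k => ‖v k‖ ^ 2) atTop (𝓝 0) := by
    simpa [inv_mul_cancel_left₀ hC] using h.const_mul C⁻¹
  simpa using tendsto_zero_iff_norm_tendsto_zero.2 (by simpa using hsq.sqrt)

namespace AlgSeq

variable {M : Set E} {T : E → Submodule ℝ E} {Ret : Retraction M T} {φ : E → ℝ}
  {σ β τmin τmax pmin a b : ℝ} (A : AlgSeq M T Ret φ σ β τmin τmax pmin a b)

theorem τ_nonneg (hβ : 0 ≤ β) (hτmin : 0 ≤ τmin) (k : ℕ) : 0 ≤ A.τ k := by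
  rw [A.τ_def k]
  exact mul_nonneg (pow_nonneg hβ _) (hτmin.trans (A.τhat_mem k).1)

theorem τ_le (hβ : β ∈ Set.Icc (0:ℝ) 1) (hτmin : 0 ≤ τmin) (k : ℕ) : A.τ k ≤ τmax := by
  rw [A.τ_def k]
  calc β ^ A.j k * A.τhat k ≤ 1 * τmax :=
        mul_le_mul (pow_le_one₀ hβ.1 hβ.2) (A.τhat_mem k).2
          (hτmin.trans (A.τhat_mem k).1) zero_le_one
    _ = τmax := one_mul _

theorem φ_x_succ_le (hσ : 0 ≤ σ) {k : ℕ} (hτ : 0 ≤ A.τ k) :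
    φ (A.x (k + 1)) ≤ A.Rv k - σ * A.τ k * a * ‖A.d k‖ ^ 2 := by
  have hls : φ (A.x (k + 1)) ≤ A.Rv k + σ * A.τ k * inner ℝ (A.w k) (A.d k) := by
    simpa only [Set.mem_ofPred_eq, ← A.τ_def k, ← A.x_succ k] using (A.j_least k).1
  have hdesc := mul_le_mul_of_nonneg_left (A.descent k) (mul_nonneg hσ hτ)
  linarith

theorem Rv_succ_le (hσ : 0 ≤ σ) (ha : 0 ≤ a) (hpmin : 0 ≤ pmin) {k : ℕ} (hτ : 0 ≤ A.τ k) :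
    A.Rv (k + 1) ≤ A.Rv k - pmin * (σ * A.τ k * a * ‖A.d k‖ ^ 2) := by
  have hp := (A.p_mem k).1
  have hQ : 0 ≤ σ * A.τ k * a * ‖A.d k‖ ^ 2 := by positivity
  rw [A.R_succ k]
  nlinarith [mul_le_mul_of_nonneg_left (A.φ_x_succ_le hσ hτ) (hpmin.trans hp),
    mul_le_mul_of_nonneg_right hp hQ]

theorem sufficient_decrease (hσ : 0 ≤ σ) (hβ : β ∈ Set.Icc (0:ℝ) 1) (hτmin : 0 ≤ τmin)
    (hpmin : 0 ≤ pmin) (ha : 0 ≤ a) (k : ℕ) :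
    pmin * σ * a * (A.τ k ^ 2 / τmax) * ‖A.d k‖ ^ 2 ≤ A.Rv k - A.Rv (k + 1) := by
  have hτ := A.τ_nonneg hβ.1 hτmin k
  have hτle := A.τ_le hβ hτmin k
  have hτsq : A.τ k ^ 2 / τmax ≤ A.τ k :=
    calc A.τ k ^ 2 / τmax = A.τ k * (A.τ k / τmax) := by ring
      _ ≤ A.τ k * 1 := mul_le_mul_of_nonneg_left (div_le_one_of_le₀ hτle (hτ.trans hτle)) hτ
      _ = A.τ k := mul_one _
  have hc : 0 ≤ pmin * σ * a * ‖A.d k‖ ^ 2 := by positivity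
  nlinarith [A.Rv_succ_le hσ ha hpmin hτ, mul_le_mul_of_nonneg_left hτsq hc]

end AlgSeq

theorem stmt7_general
    (M : Set E) (T : E → Submodule ℝ E) (Ret : Retraction M T) (φ : E → ℝ)
    (σ β τmin τmax pmin a b : ℝ)
    (hσ : σ ∈ Set.Ioo (0:ℝ) 1) (hβ : β ∈ Set.Ioo (0:ℝ) 1)
    (hτmin : 0 < τmin) (hττ : τmin ≤ τmax)
    (hpmin : pmin ∈ Set.Ioc (0:ℝ) 1) (ha : 0 < a)
    (A : AlgSeq M T Ret φ σ β τmin τmax pmin a b)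
    (φstar : ℝ) (hφstar : Tendsto A.Rv atTop (𝓝 φstar)) :
    (∀ k : ℕ, ∑ i ∈ Finset.range k,
        pmin * σ * a * ((A.τ i) ^ 2 / τmax) * ‖A.d i‖ ^ 2 ≤ A.Rv 0 - φstar) ∧
    Tendsto (fun k => A.τ k • A.d k) atTop (𝓝 (0 : E)) := by
  have hp0 := hpmin.1
  have hσ0 := hσ.1
  have hτmax : 0 < τmax := hτmin.trans_le hττ
  set c : ℕ → ℝ := fun i => pmin * σ * a * ((A.τ i) ^ 2 / τmax) * ‖A.d i‖ ^ 2
  have hc : ∀ k, 0 ≤ c k := fun k => by positivity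
  have hsum := sum_range_le_sub_of_tendsto hc
    (A.sufficient_decrease hσ0.le ⟨hβ.1.le, hβ.2.le⟩ hτmin.le hp0.le ha.le) hφstar
  refine ⟨hsum, tendsto_zero_of_tendsto_const_mul_norm_sq
    (C := pmin * σ * a / τmax) (by positivity) ?_⟩
  have hc0 : Tendsto c atTop (𝓝 0) := (summable_of_sum_range_le hc hsum).tendsto_atTop_zero
  refine hc0.congr fun k => ?_
  simp only [c, norm_smul, mul_pow, Real.norm_eq_abs, sq_abs]
  ring

/-- Telescoping bound on the partial sums; consequently `τ_k d^k → 0`. -/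
theorem stmt7
    (M : Set E) (T : E → Submodule ℝ E) (Ret : Retraction M T) (φ : E → ℝ)
    (σ β τmin τmax pmin a b : ℝ)
    (hσ : σ ∈ Set.Ioo (0:ℝ) 1) (hβ : β ∈ Set.Ioo (0:ℝ) 1)
    (hτmin : 0 < τmin) (hττ : τmin ≤ τmax)
    (hpmin : pmin ∈ Set.Ioc (0:ℝ) 1) (ha : 0 < a) (hb : 0 < b)
    (hM : IsSubmanifold M T)
    (hφcont : ContinuousOn φ M)
    (hφbdd : BddBelow (φ '' M))
    (hA1 : AssumptionA1 M T Ret φ)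
    (A : AlgSeq M T Ret φ σ β τmin τmax pmin a b)
    (φstar : ℝ) (hφstar : Tendsto A.Rv atTop (𝓝 φstar)) :
    (∀ k : ℕ, ∑ i ∈ Finset.range k,
        pmin * σ * a * ((A.τ i) ^ 2 / τmax) * ‖A.d i‖ ^ 2 ≤ A.Rv 0 - φstar) ∧
    Tendsto (fun k => A.τ k • A.d k) atTop (𝓝 (0 : E)) :=
  stmt7_general M T Ret φ σ β τmin τmax pmin a b hσ hβ hτmin hττ hpmin ha A φstar hφstar

end
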